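/- Let k be even. In the space V_k of polynomials of degree ≤ k−2 with the weight k−2 slash action of PGL₂(Z), the matrix identity ε(1−T)(1+M) = −(1−T)(1+M)T^{−1}ε holds projectively (in PGL₂(Z)-group ring acting on V_k), where ε = [[−1,0],[0,1]], T = [[1,1],[0,1]], M = [[−1,−1],[2,1]]. Consequently, if P ∈ V_k satisfies P|(1−T)(1+M) = 0, then both P|(1+ε) and P|(1−ε) also satisfy this condition, so W_k = W_k^+ ⊕ W_k^− decomposes into even and odd parts. -/
import Mathlib


open Polynomial

/-- Weight-`w` slash action of the matrix [[a,b],[c,d]] on a polynomial of degree ≤ w: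
`(f | γ)(x) = (cx+d)^w f((ax+b)/(cx+d))`, written polynomially as
`Σ_i coeff_i (aX+b)^i (cX+d)^{w−i}`. -/
noncomputable def slash (w : ℕ) (a b c d : ℚ) (f : Polynomial ℚ) : Polynomial ℚ :=
  ∑ i ∈ Finset.range (w + 1),
    C (f.coeff i) * (C a * X + C b) ^ i * (C c * X + C d) ^ (w - i)

lemma slash_natDegree (w : ℕ) (a b c d : ℚ) (f : Polynomial ℚ) :
    (slash w a b c d f).natDegree ≤ w := by
  refine Polynomial.natDegree_sum_le_of_forall_le _ _ (fun i hi => ?_)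
  have hi' : i ≤ w := Nat.lt_succ_iff.mp (Finset.mem_range.mp hi)
  have hP : (C a * X + C b : ℚ[X]).natDegree ≤ 1 := natDegree_linear_le
  have hQ : (C c * X + C d : ℚ[X]).natDegree ≤ 1 := natDegree_linear_le
  calc (C (f.coeff i) * (C a * X + C b) ^ i * (C c * X + C d) ^ (w - i)).natDegree
      ≤ (C (f.coeff i) * (C a * X + C b) ^ i).natDegree
          + ((C c * X + C d) ^ (w - i)).natDegree := natDegree_mul_le
    _ ≤ ((C (f.coeff i)).natDegree + ((C a * X + C b) ^ i).natDegree)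
          + ((C c * X + C d) ^ (w - i)).natDegree := by
        exact Nat.add_le_add_right natDegree_mul_le _
    _ ≤ (0 + i * 1) + (w - i) * 1 := by
        refine Nat.add_le_add (Nat.add_le_add (le_of_eq (natDegree_C _)) ?_) ?_
        · exact natDegree_pow_le.trans (Nat.mul_le_mul_left _ hP)
        · exact natDegree_pow_le.trans (Nat.mul_le_mul_left _ hQ)
    _ ≤ w := by omega

lemma slash_eq_ratfunc (w : ℕ) (a b c d : ℚ) (g : Polynomial ℚ) (hg : g.natDegree ≤ w)
    (hQ : algebraMap (Polynomial ℚ) (RatFunc ℚ) (C c * X + C d) ≠ 0) :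
    algebraMap (Polynomial ℚ) (RatFunc ℚ) (slash w a b c d g)
      = (algebraMap (Polynomial ℚ) (RatFunc ℚ) (C c * X + C d)) ^ w *
        Polynomial.aeval
          (algebraMap (Polynomial ℚ) (RatFunc ℚ) (C a * X + C b) /
            algebraMap (Polynomial ℚ) (RatFunc ℚ) (C c * X + C d)) g := by
  set P := algebraMap (Polynomial ℚ) (RatFunc ℚ) (C a * X + C b) with hP
  set Q := algebraMap (Polynomial ℚ) (RatFunc ℚ) (C c * X + C d) with hQdef
  rw [Polynomial.aeval_eq_sum_range' (Nat.lt_succ_of_le hg), slash, map_sum, Finset.mul_sum]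
  refine Finset.sum_congr rfl (fun i hi => ?_)
  have hi' : i ≤ w := Nat.lt_succ_iff.mp (Finset.mem_range.mp hi)
  rw [map_mul, map_mul, map_pow, map_pow, ← hP, ← hQdef, pow_sub₀ _ hQ hi', div_pow,
    div_eq_mul_inv, Algebra.smul_def, IsScalarTower.algebraMap_apply ℚ (Polynomial ℚ) (RatFunc ℚ),
    Polynomial.algebraMap_eq]
  ring

lemma linear_one_ne_zero (c : ℚ) : (C c * X + C 1 : ℚ[X]) ≠ 0 := by
  intro h0
  have := congrArg (Polynomial.eval 0) h0
  simp at this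

lemma algmap_linear_ne_zero (c d : ℚ) (h : (C c * X + C d : ℚ[X]) ≠ 0) :
    algebraMap (Polynomial ℚ) (RatFunc ℚ) (C c * X + C d) ≠ 0 :=
  (map_ne_zero_iff _ (IsFractionRing.injective (Polynomial ℚ) (RatFunc ℚ))).mpr h

lemma slash_slash (w : ℕ) (a b c d a' b' c' d' : ℚ) (f : Polynomial ℚ)
    (hQ' : (C c' * X + C d' : ℚ[X]) ≠ 0) :
    slash w a' b' c' d' (slash w a b c d f)
      = slash w (a*a'+b*c') (a*b'+b*d') (c*a'+d*c') (c*b'+d*d') f := by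
  apply IsFractionRing.injective (Polynomial ℚ) (RatFunc ℚ)
  have hQ0 := algmap_linear_ne_zero c' d' hQ'
  rw [slash_eq_ratfunc w a' b' c' d' _ (slash_natDegree w a b c d f) hQ0]
  have hCA : ∀ r : ℚ, algebraMap (Polynomial ℚ) (RatFunc ℚ) (C r)
      = algebraMap ℚ (RatFunc ℚ) r := by
    intro r
    rw [← Polynomial.algebraMap_eq, ← IsScalarTower.algebraMap_apply]
  set α : ℚ → RatFunc ℚ := fun r => algebraMap ℚ (RatFunc ℚ) r with hα
  set x : RatFunc ℚ := algebraMap (Polynomial ℚ) (RatFunc ℚ) X with hx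
  have hq0 : α c' * x + α d' ≠ 0 := by
    have : algebraMap (Polynomial ℚ) (RatFunc ℚ) (C c' * X + C d') = α c' * x + α d' := by
      simp [map_add, map_mul, hCA, hα, hx]
    rwa [this] at hQ0
  simp only [slash, map_sum, Finset.mul_sum, map_mul, map_pow, map_add, aeval_C, aeval_X,
    hCA, ← hα, ← hx]
  refine Finset.sum_congr rfl (fun i hi => ?_)
  have hi' : i ≤ w := Nat.lt_succ_iff.mp (Finset.mem_range.mp hi)
  have hsplit : (α c' * x + α d') ^ w
      = (α c' * x + α d') ^ i * (α c' * x + α d') ^ (w - i) := by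
    rw [← pow_add, Nat.add_sub_cancel' hi']
  have key : ∀ u v : ℚ, (α c' * x + α d') *
      (α u * ((α a' * x + α b') / (α c' * x + α d')) + α v)
      = α (u*a'+v*c') * x + α (u*b'+v*d') := by
    intro u v
    rw [mul_add, mul_comm (α c' * x + α d') (α u * _), mul_assoc, div_mul_cancel₀ _ hq0]
    simp only [hα, map_add, map_mul]
    ring
  calc (α c' * x + α d') ^ w * (α (f.coeff i) *
          (α a * ((α a' * x + α b') / (α c' * x + α d')) + α b) ^ i *
          (α c * ((α a' * x + α b') / (α c' * x + α d')) + α d) ^ (w - i))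
      = α (f.coeff i) *
          ((α c' * x + α d') * (α a * ((α a' * x + α b') / (α c' * x + α d')) + α b)) ^ i *
          ((α c' * x + α d') * (α c * ((α a' * x + α b') / (α c' * x + α d')) + α d)) ^ (w - i) := by
        rw [hsplit, mul_pow, mul_pow]; ring
    _ = α (f.coeff i) * (α (a*a'+b*c') * x + α (a*b'+b*d')) ^ i *
          (α (c*a'+d*c') * x + α (c*b'+d*d')) ^ (w - i) := by rw [key, key]
    _ = α (f.coeff i) * ((α a * α a' + α b * α c') * x + (α a * α b' + α b * α d')) ^ i *
          ((α c * α a' + α d * α c') * x + (α c * α b' + α d * α d')) ^ (w - i) := by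
        simp only [hα, map_add, map_mul]

lemma slash_neg_mat (w : ℕ) (hw : Even w) (a b c d : ℚ) (f : Polynomial ℚ) :
    slash w (-a) (-b) (-c) (-d) f = slash w a b c d f := by
  unfold slash
  refine Finset.sum_congr rfl (fun i hi => ?_)
  have hi' : i ≤ w := Nat.lt_succ_iff.mp (Finset.mem_range.mp hi)
  have h1 : (C (-a) * X + C (-b) : ℚ[X]) = -(C a * X + C b) := by
    simp [map_neg]; ring
  have h2 : (C (-c) * X + C (-d) : ℚ[X]) = -(C c * X + C d) := by
    simp [map_neg]; ring
  have hone : (-1 : ℚ[X]) ^ i * (-1 : ℚ[X]) ^ (w - i) = 1 := by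
    rw [← pow_add, Nat.add_sub_cancel' hi', hw.neg_one_pow]
  calc C (f.coeff i) * (C (-a) * X + C (-b)) ^ i * (C (-c) * X + C (-d)) ^ (w - i)
      = ((-1 : ℚ[X]) ^ i * (-1 : ℚ[X]) ^ (w - i)) *
          (C (f.coeff i) * (C a * X + C b) ^ i * (C c * X + C d) ^ (w - i)) := by
        rw [h1, h2, neg_pow (C a * X + C b), neg_pow (C c * X + C d)]; ring
    _ = C (f.coeff i) * (C a * X + C b) ^ i * (C c * X + C d) ^ (w - i) := by
        rw [hone, one_mul]

lemma slash_add (w : ℕ) (a b c d : ℚ) (f g : Polynomial ℚ) :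
    slash w a b c d (f + g) = slash w a b c d f + slash w a b c d g := by
  simp [slash, coeff_add, C_add, add_mul, Finset.sum_add_distrib]

lemma slash_sub (w : ℕ) (a b c d : ℚ) (f g : Polynomial ℚ) :
    slash w a b c d (f - g) = slash w a b c d f - slash w a b c d g := by
  simp [slash, coeff_sub, C_sub, sub_mul, Finset.sum_sub_distrib]

lemma slash_zero (w : ℕ) (a b c d : ℚ) : slash w a b c d 0 = 0 := by
  simp [slash]

/-- `P|(1−T)(1+M) = P + P|M − P|T − P|TM` with T=[[1,1],[0,1]], M=[[−1,−1],[2,1]],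
TM=[[1,0],[2,1]]. -/
noncomputable def periodRel (w : ℕ) (P : Polynomial ℚ) : Polynomial ℚ :=
  P + slash w (-1) (-1) 2 1 P - slash w 1 1 0 1 P - slash w 1 0 2 1 P

lemma periodRel_add (w : ℕ) (f g : Polynomial ℚ) :
    periodRel w (f + g) = periodRel w f + periodRel w g := by
  simp only [periodRel, slash_add]; ring

lemma periodRel_sub (w : ℕ) (f g : Polynomial ℚ) :
    periodRel w (f - g) = periodRel w f - periodRel w g := by
  simp only [periodRel, slash_sub]; ring

lemma main_identity (w : ℕ) (hw : Even w) (f : Polynomial ℚ) :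
    periodRel w (slash w (-1) 0 0 1 f) = -slash w (-1) (-1) 0 1 (periodRel w f) := by
  have e1 : slash w (-1) (-1) 2 1 (slash w (-1) 0 0 1 f) = slash w 1 1 2 1 f := by
    rw [slash_slash _ _ _ _ _ _ _ _ _ _ (linear_one_ne_zero 2)]; norm_num
  have e2 : slash w 1 1 0 1 (slash w (-1) 0 0 1 f) = slash w (-1) (-1) 0 1 f := by
    rw [slash_slash _ _ _ _ _ _ _ _ _ _ (linear_one_ne_zero 0)]; norm_num
  have e3 : slash w 1 0 2 1 (slash w (-1) 0 0 1 f) = slash w (-1) 0 2 1 f := by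
    rw [slash_slash _ _ _ _ _ _ _ _ _ _ (linear_one_ne_zero 2)]; norm_num
  have e4 : slash w (-1) (-1) 0 1 (slash w (-1) (-1) 2 1 f) = slash w (-1) 0 2 1 f := by
    rw [slash_slash _ _ _ _ _ _ _ _ _ _ (linear_one_ne_zero 0)]
    norm_num
    have := slash_neg_mat w hw (-1) 0 2 1 f
    norm_num at this
    rw [this]
  have e5 : slash w (-1) (-1) 0 1 (slash w 1 1 0 1 f) = slash w (-1) 0 0 1 f := by
    rw [slash_slash _ _ _ _ _ _ _ _ _ _ (linear_one_ne_zero 0)]; norm_num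
  have e6 : slash w (-1) (-1) 0 1 (slash w 1 0 2 1 f) = slash w 1 1 2 1 f := by
    rw [slash_slash _ _ _ _ _ _ _ _ _ _ (linear_one_ne_zero 0)]
    norm_num
    have := slash_neg_mat w hw 1 1 2 1 f
    norm_num at this
    rw [this]
  rw [periodRel, periodRel, e1, e2, e3, slash_sub, slash_sub, slash_add, e4, e5, e6]
  ring

/-- The projective group-ring identity ε(1−T)(1+M) = −(1−T)(1+M)T⁻¹ε on polynomials of
degree ≤ k−2 (here ε=[[−1,0],[0,1]] and T⁻¹ε=[[−1,−1],[0,1]]), and its consequence: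
if P|(1−T)(1+M) = 0 then both P|(1+ε) and P|(1−ε) satisfy the same relation. -/
theorem epsilon_conjugation_and_parity_decomposition (k : ℕ) (hke : Even k) (hk : 2 ≤ k) :
    (∀ f : Polynomial ℚ, f.natDegree ≤ k - 2 →
      periodRel (k - 2) (slash (k - 2) (-1) 0 0 1 f) =
        -slash (k - 2) (-1) (-1) 0 1 (periodRel (k - 2) f)) ∧
    (∀ P : Polynomial ℚ, P.natDegree ≤ k - 2 → periodRel (k - 2) P = 0 →
      periodRel (k - 2) (P + slash (k - 2) (-1) 0 0 1 P) = 0 ∧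
      periodRel (k - 2) (P - slash (k - 2) (-1) 0 0 1 P) = 0) := by
  have hw : Even (k - 2) := by
    rw [Nat.even_sub hk]
    simp [hke]
  refine ⟨fun f _ => main_identity (k - 2) hw f, fun P hP h0 => ?_⟩
  have h1 : periodRel (k - 2) (slash (k - 2) (-1) 0 0 1 P) = 0 := by
    rw [main_identity (k - 2) hw P, h0, slash_zero, neg_zero]
  constructor
  · rw [periodRel_add, h0, h1, add_zero]
  · rw [periodRel_sub, h0, h1, sub_zero]
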